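/- The canonical map φ : SStar_{hp}(R) → SStar_{f,hp}(R), sending ⋆ to its associated finite type semistar operation ⋆_f, is a topological retraction (it is continuous, surjective, and restricts to the identity on SStar_{f,hp}(R)) when both spaces carry their Zariski topologies. -/

import Mathlib

open Pointwise

section Instances
variable {A : Type*} {K : Type*} [CommRing A] [Field K] [Algebra A K]
instance : SMulCommClass K A K := SMulCommClass.symm A K K
end Instances

/-- A semistar operation on an integral domain `A` with quotient field `K`: a map on the
nonzero `A`-submodules of `K` satisfying `(xE)^⋆ = xE^⋆`, monotonicity, `E ⊆ E^⋆` and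
idempotency.  (We normalize the irrelevant value at `⊥` by `⊥ ↦ ⊥`.) -/
structure Semistar (A K : Type*) [CommRing A] [Field K] [Algebra A K] where
  toFun : Submodule A K → Submodule A K
  map_bot' : toFun ⊥ = ⊥
  smul' : ∀ x : K, x ≠ 0 → ∀ E : Submodule A K, E ≠ ⊥ → toFun (x • E) = x • toFun E
  mono' : ∀ E F : Submodule A K, E ≠ ⊥ → E ≤ F → toFun E ≤ toFun F
  le' : ∀ E : Submodule A K, E ≠ ⊥ → E ≤ toFun E
  idem' : ∀ E : Submodule A K, E ≠ ⊥ → toFun (toFun E) = toFun E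

section
variable {Γ : Type*} [AddCommMonoid Γ] [LinearOrder Γ]
  [CovariantClass Γ Γ (· + ·) (· < ·)] [Nontrivial Γ]
variable {A : Type*} [CommRing A] [IsDomain A]
variable {K : Type*} [Field K] [Algebra A K] [IsFractionRing A K]
variable (𝒜 : Γ → AddSubgroup A) [GradedRing 𝒜]

/-- `a` is a nonzero homogeneous element of the graded domain `A`. -/
def IsHomog (a : A) : Prop := a ≠ 0 ∧ ∃ γ : Γ, a ∈ 𝒜 γ

/-- `x ∈ K` is a (nonzero) homogeneous element of the homogeneous quotient ring `R_H`. -/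
def IsHomogElem (x : K) : Prop :=
  ∃ a s : A, IsHomog 𝒜 a ∧ IsHomog 𝒜 s ∧ x * algebraMap A K s = algebraMap A K a

/-- `x ∈ K` belongs to the homogeneous quotient ring `R_H`. -/
def MemRH (x : K) : Prop :=
  ∃ a s : A, IsHomog 𝒜 s ∧ x * algebraMap A K s = algebraMap A K a

/-- The image in `K` of an integral ideal of `A`. -/
def idealToK (I : Ideal A) : Submodule A K := Submodule.map (Algebra.linearMap A K) I

/-- `E` is a homogeneous fractional ideal of `A`. -/
def IsHomogFrac (E : Submodule A K) : Prop :=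
  ∃ s : A, IsHomog 𝒜 s ∧ ∃ I : Ideal A, Ideal.IsHomogeneous 𝒜 I ∧
    algebraMap A K s • E = idealToK (K := K) I

/-- `star` is homogeneous preserving. -/
def HomogPres (star : Submodule A K → Submodule A K) : Prop :=
  ∀ E : Submodule A K, E ≠ ⊥ → IsHomogFrac 𝒜 E → IsHomogFrac 𝒜 (star E)

/-- Membership in `E^{⋆_f} = ⋃ {F^⋆ : F nonzero finitely generated, F ⊆ E}`. -/
def MemStarF (star : Submodule A K → Submodule A K) (E : Submodule A K) (x : K) : Prop :=
  ∃ F : Submodule A K, F ≠ ⊥ ∧ F.FG ∧ F ≤ E ∧ x ∈ star F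

/-- `star` is of finite type, i.e. `⋆ = ⋆_f`. -/
def IsFiniteType (star : Submodule A K → Submodule A K) : Prop :=
  ∀ E : Submodule A K, E ≠ ⊥ → ∀ x : K, x ∈ star E ↔ MemStarF star E x

/-- The `A`-submodule `ES` of `K` generated by all products `e * v`, `e ∈ E`, `v ∈ S`. -/
def mulSet (E : Submodule A K) (S : Set K) : Submodule A K :=
  Submodule.span A {z : K | ∃ e ∈ E, ∃ v ∈ S, z = e * v}

/-- `V` is a homogeneous overring of `A`: `R ⊆ V ⊆ R_H` and `V` is generated as an
additive group by its homogeneous elements. -/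
def IsHomogOverring (V : Subring K) : Prop :=
  (∀ a : A, algebraMap A K a ∈ V) ∧ (∀ x ∈ V, MemRH 𝒜 x) ∧
  (∀ v ∈ V, v ∈ AddSubgroup.closure {x : K | x ∈ V ∧ IsHomogElem 𝒜 x})

/-- The order on semistar operations: `σ ≤ τ` iff `E^σ ⊆ E^τ` for every nonzero `E`. -/
def sle (σ τ : Semistar A K) : Prop :=
  ∀ E : Submodule A K, E ≠ ⊥ → σ.toFun E ≤ τ.toFun E

end

section Spaces
variable {Γ : Type*} [AddCommMonoid Γ] [LinearOrder Γ]
  [CovariantClass Γ Γ (· + ·) (· < ·)] [Nontrivial Γ]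
  {A : Type*} [CommRing A] [IsDomain A]
  (K : Type*) [Field K] [Algebra A K] [IsFractionRing A K]
  (𝒜 : Γ → AddSubgroup A) [GradedRing 𝒜]

/-- `SStar_{f,hp}(R)`: the set of finite type homogeneous preserving semistar
operations on `R`. -/
abbrev SStarFHP := {s : Semistar A K // IsFiniteType s.toFun ∧ HomogPres 𝒜 s.toFun}

/-- The Zariski topology on `SStar_{f,hp}(R)`, with subbasic open sets
`V_E = {⋆ : 1 ∈ E^⋆}` for `E` a nonzero `A`-submodule of `K`. -/
instance : TopologicalSpace (SStarFHP K 𝒜) :=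
  TopologicalSpace.generateFrom
    {S : Set (SStarFHP K 𝒜) | ∃ E : Submodule A K, E ≠ ⊥ ∧ S = {s | (1 : K) ∈ s.1.toFun E}}

/-- `SStar_{hp}(R)`: the set of homogeneous preserving semistar operations on `R`. -/
abbrev SStarHP := {s : Semistar A K // HomogPres 𝒜 s.toFun}

/-- The Zariski topology on `SStar_{hp}(R)`. -/
instance : TopologicalSpace (SStarHP K 𝒜) :=
  TopologicalSpace.generateFrom
    {S : Set (SStarHP K 𝒜) | ∃ E : Submodule A K, E ≠ ⊥ ∧ S = {s | (1 : K) ∈ s.1.toFun E}}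

/-- `Over_h(R)`: the set of homogeneous overrings of `R`. -/
abbrev OverH := {T : Subring K // IsHomogOverring 𝒜 T}

/-- The Zariski topology on `Over_h(R)`, with basic open sets `B_F = {T : F ⊆ T}` for `F`
a finite subset of `K`. -/
instance : TopologicalSpace (OverH K 𝒜) :=
  TopologicalSpace.generateFrom
    {S : Set (OverH K 𝒜) | ∃ F : Set K, F.Finite ∧ S = {T | F ⊆ (T.1 : Set K)}}

end Spaces

/-!
`E^{⋆_f}` is the directed union of the `F^⋆` over the nonzero finitely generated `F ⊆ E`; this
is a finite type semistar operation, equal to `⋆` when `⋆` is of finite type, and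
`{⋆ : 1 ∈ E^{⋆_f}}` is the union of the open sets `{⋆ : 1 ∈ F^⋆}`.

The real content is that `⋆_f` preserves homogeneity. If `E` is homogeneous, every finitely
generated `G ⊆ E` lies in a finitely generated homogeneous `H ⊆ E` (use the homogeneous
components of generators of `G`); then `H^⋆` is homogeneous, so the homogeneous components of
an element of `R ∩ H^⋆` stay in `H^⋆ ⊆ E^{⋆_f}`. A homogeneous `t` with `t E^⋆ ⊆ R` also
scales `E^{⋆_f}` into `R`, which gives its homogeneous denominator.
-/

namespace Submodule

variable {A K : Type*} [CommRing A] [Field K] [Algebra A K]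

theorem smul_le_iff_le_inv_smul {c : K} (hc : c ≠ 0) {M N : Submodule A K} :
    c • M ≤ N ↔ M ≤ c⁻¹ • N := by
  constructor
  · intro h
    simpa [inv_smul_smul₀ hc] using smul_le_smul_left c⁻¹ h
  · intro h
    simpa [smul_inv_smul₀ hc] using smul_le_smul_left c h

theorem smul_ne_bot {c : K} (hc : c ≠ 0) {M : Submodule A K} (hM : M ≠ ⊥) : c • M ≠ ⊥ := by
  intro h
  apply hM
  rw [← inv_smul_smul₀ hc M, h, smul_bot']

end Submodule

namespace Semistar

variable {A K : Type*} [CommRing A] [Field K] [Algebra A K]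

theorem ext {s t : Semistar A K} (h : s.toFun = t.toFun) : s = t := by
  cases s
  cases t
  congr

theorem nonempty_fg_le {E : Submodule A K} (hE : E ≠ ⊥) :
    Nonempty {F : Submodule A K // F ≠ ⊥ ∧ F.FG ∧ F ≤ E} := by
  obtain ⟨y, hyE, hy⟩ := (Submodule.ne_bot_iff E).1 hE
  exact ⟨⟨A ∙ y, by simpa using hy, Submodule.fg_span_singleton y,
    (Submodule.span_singleton_le_iff_mem y E).2 hyE⟩⟩

variable (s : Semistar A K)

def finFun (E : Submodule A K) : Submodule A K :=
  ⨆ F : {F : Submodule A K // F ≠ ⊥ ∧ F.FG ∧ F ≤ E}, s.toFun F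

theorem toFun_le_finFun {E F : Submodule A K} (hF : F ≠ ⊥) (hFfg : F.FG) (hFE : F ≤ E) :
    s.toFun F ≤ s.finFun E :=
  le_iSup (fun G : {F : Submodule A K // F ≠ ⊥ ∧ F.FG ∧ F ≤ E} => s.toFun G) ⟨F, hF, hFfg, hFE⟩

theorem directed_toFun (E : Submodule A K) :
    Directed (· ≤ ·) fun F : {F : Submodule A K // F ≠ ⊥ ∧ F.FG ∧ F ≤ E} => s.toFun F := by
  rintro ⟨F, hF, hFfg, hFE⟩ ⟨G, hG, hGfg, hGE⟩
  exact ⟨⟨F ⊔ G, ne_bot_of_le_ne_bot hF le_sup_left, hFfg.sup hGfg, sup_le hFE hGE⟩,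
    s.mono' _ _ hF le_sup_left, s.mono' _ _ hG le_sup_right⟩

theorem mem_finFun_iff {E : Submodule A K} (hE : E ≠ ⊥) {x : K} :
    x ∈ s.finFun E ↔ MemStarF s.toFun E x := by
  have := nonempty_fg_le hE
  rw [finFun, Submodule.mem_iSup_of_directed _ (s.directed_toFun E)]
  exact ⟨fun ⟨F, hx⟩ => ⟨F, F.2.1, F.2.2.1, F.2.2.2, hx⟩,
    fun ⟨F, hF, hFfg, hFE, hx⟩ => ⟨⟨F, hF, hFfg, hFE⟩, hx⟩⟩

theorem le_finFun (E : Submodule A K) : E ≤ s.finFun E := by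
  intro x hx
  rcases eq_or_ne x 0 with rfl | hx0
  · exact zero_mem _
  · have hx' : A ∙ x ≠ ⊥ := by simpa using hx0
    exact s.toFun_le_finFun hx' (Submodule.fg_span_singleton x)
      ((Submodule.span_singleton_le_iff_mem x E).2 hx)
      (s.le' _ hx' (Submodule.mem_span_singleton_self x))

theorem finFun_mono {E F : Submodule A K} (h : E ≤ F) : s.finFun E ≤ s.finFun F :=
  iSup_le fun G => s.toFun_le_finFun G.2.1 G.2.2.1 (G.2.2.2.trans h)

theorem finFun_le (E : Submodule A K) : s.finFun E ≤ s.toFun E :=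
  iSup_le fun G => s.mono' _ _ G.2.1 G.2.2.2

theorem finFun_smul_le {x : K} (hx : x ≠ 0) (E : Submodule A K) :
    s.finFun (x • E) ≤ x • s.finFun E := by
  refine iSup_le fun ⟨F, hF, hFfg, hFE⟩ => ?_
  have hF' : x⁻¹ • F ≠ ⊥ := Submodule.smul_ne_bot (inv_ne_zero hx) hF
  have hFE' : x⁻¹ • F ≤ E := by rwa [Submodule.smul_le_iff_le_inv_smul (inv_ne_zero hx), inv_inv]
  calc s.toFun F = x • s.toFun (x⁻¹ • F) := by rw [← s.smul' x hx _ hF', smul_inv_smul₀ hx]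
    _ ≤ x • s.finFun E := smul_le_smul_left x (s.toFun_le_finFun hF' (hFfg.map _) hFE')

theorem finFun_smul {x : K} (hx : x ≠ 0) (E : Submodule A K) :
    s.finFun (x • E) = x • s.finFun E := by
  refine le_antisymm (s.finFun_smul_le hx E) ?_
  have h := s.finFun_smul_le (inv_ne_zero hx) (x • E)
  rwa [inv_smul_smul₀ hx, ← Submodule.smul_le_iff_le_inv_smul hx] at h

theorem exists_le_toFun_of_fg_le_finFun {E F : Submodule A K} (hE : E ≠ ⊥) (hF : F.FG)
    (hFE : F ≤ s.finFun E) : ∃ G : Submodule A K, G ≠ ⊥ ∧ G.FG ∧ G ≤ E ∧ F ≤ s.toFun G := by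
  have := nonempty_fg_le hE
  obtain ⟨_, ⟨⟨G, hG, hGfg, hGE⟩, rfl⟩, hFG⟩ :=
    (CompleteLattice.isCompactElement_iff_le_of_directed_sSup_le _ F).1
      ((Submodule.fg_iff_compact F).1 hF) _ (Set.range_nonempty _)
      (s.directed_toFun E).directedOn_range (by rwa [sSup_range])
  exact ⟨G, hG, hGfg, hGE, hFG⟩

theorem finFun_idem {E : Submodule A K} (hE : E ≠ ⊥) :
    s.finFun (s.finFun E) = s.finFun E := by
  refine le_antisymm (iSup_le fun ⟨F, hF, hFfg, hFE⟩ => ?_) (s.le_finFun _)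
  obtain ⟨G, hG, hGfg, hGE, hFG⟩ := s.exists_le_toFun_of_fg_le_finFun hE hFfg hFE
  calc s.toFun F ≤ s.toFun (s.toFun G) := s.mono' _ _ hF hFG
    _ = s.toFun G := s.idem' G hG
    _ ≤ s.finFun E := s.toFun_le_finFun hG hGfg hGE

def fin : Semistar A K where
  toFun := s.finFun
  map_bot' := by
    have : IsEmpty {F : Submodule A K // F ≠ ⊥ ∧ F.FG ∧ F ≤ ⊥} :=
      ⟨fun F => F.2.1 (le_bot_iff.1 F.2.2.2)⟩
    exact iSup_of_empty _
  smul' x hx E _ := s.finFun_smul hx E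
  mono' _ _ _ h := s.finFun_mono h
  le' E _ := s.le_finFun E
  idem' _ hE := s.finFun_idem hE

theorem isFiniteType_fin : IsFiniteType s.fin.toFun := by
  intro E hE x
  change x ∈ s.finFun E ↔ MemStarF s.finFun E x
  rw [s.mem_finFun_iff hE]
  constructor
  · rintro ⟨F, hF, hFfg, hFE, hx⟩
    exact ⟨F, hF, hFfg, hFE, s.toFun_le_finFun hF hFfg le_rfl hx⟩
  · rintro ⟨F, hF, hFfg, hFE, hx⟩
    exact ⟨F, hF, hFfg, hFE, s.finFun_le F hx⟩

theorem fin_eq_self (hs : IsFiniteType s.toFun) : s.fin = s := by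
  refine ext (funext fun E => ?_)
  rcases eq_or_ne E ⊥ with rfl | hE
  · rw [s.fin.map_bot', s.map_bot']
  · ext x
    exact (s.mem_finFun_iff hE).trans (hs E hE x).symm

end Semistar

section IdealToK

variable {A K : Type*} [CommRing A] [Field K] [Algebra A K]

theorem smul_idealToK (t : A) (I : Ideal A) :
    algebraMap A K t • idealToK (K := K) I = idealToK (Ideal.span {t} * I) := by
  ext x
  simp only [idealToK, Submodule.mem_smul_pointwise_iff_exists, Submodule.mem_map,
    Ideal.mem_span_singleton_mul]
  constructor
  · rintro ⟨_, ⟨a, ha, rfl⟩, rfl⟩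
    exact ⟨t * a, ⟨a, ha, rfl⟩, by simp⟩
  · rintro ⟨_, ⟨a, ha, rfl⟩, rfl⟩
    exact ⟨algebraMap A K a, ⟨a, ha, rfl⟩, by simp⟩

end IdealToK

theorem Ideal.exists_fg_isHomogeneous_between {ι σ A : Type*} [DecidableEq ι] [AddMonoid ι]
    [Semiring A] [SetLike σ A] [AddSubmonoidClass σ A] {𝒜 : ι → σ} [GradedRing 𝒜]
    {I J : Ideal A} (hI : I.IsHomogeneous 𝒜) (hJ : J.FG) (hJI : J ≤ I) :
    ∃ J' : Ideal A, J'.FG ∧ J'.IsHomogeneous 𝒜 ∧ J ≤ J' ∧ J' ≤ I := by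
  classical
  obtain ⟨T, rfl⟩ := hJ
  let S : Set A :=
    ⋃ t ∈ T, (fun i => (DirectSum.decompose 𝒜 t i : A)) '' ↑(DirectSum.decompose 𝒜 t).support
  have hS : ∀ x ∈ S, ∃ t ∈ T, ∃ i, (DirectSum.decompose 𝒜 t i : A) = x := by
    simp only [S, Set.mem_iUnion, Set.mem_image]
    rintro _ ⟨t, ht, i, -, rfl⟩
    exact ⟨t, ht, i, rfl⟩
  refine ⟨Ideal.span S, Submodule.fg_span (T.finite_toSet.biUnion fun t _ =>
    (Finset.finite_toSet _).image _), Ideal.homogeneous_span 𝒜 S fun x hx => ?_, ?_, ?_⟩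
  · obtain ⟨t, -, i, rfl⟩ := hS x hx
    exact ⟨i, SetLike.coe_mem _⟩
  · refine Submodule.span_le.2 fun t ht => ?_
    rw [SetLike.mem_coe, ← DirectSum.sum_support_decompose 𝒜 t]
    exact Ideal.sum_mem _ fun i hi => Ideal.subset_span (Set.mem_biUnion ht ⟨i, hi, rfl⟩)
  · refine Ideal.span_le.2 fun x hx => ?_
    obtain ⟨t, ht, i, rfl⟩ := hS x hx
    exact hI i (hJI (Submodule.subset_span ht))

section Graded

variable {Γ : Type*} [AddCommMonoid Γ] [LinearOrder Γ]
  {A : Type*} [CommRing A] {K : Type*} [Field K] [Algebra A K]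
  {𝒜 : Γ → AddSubgroup A} [GradedRing 𝒜]

theorem IsHomogFrac.smul {E : Submodule A K} (hE : IsHomogFrac 𝒜 E) {t : A}
    (ht : IsHomog 𝒜 t) : IsHomogFrac 𝒜 (algebraMap A K t • E) := by
  obtain ⟨d, hd, I, hI, hdE⟩ := hE
  refine ⟨d, hd, Ideal.span {t} * I, (Ideal.homogeneous_span 𝒜 {t} ?_).mul hI, ?_⟩
  · rintro _ rfl
    exact ht.2
  · rw [smul_smul, mul_comm, ← smul_smul, hdE, smul_idealToK]

variable [IsFractionRing A K]

theorem IsHomogFrac.exists_fg_between {E G : Submodule A K} (hE : IsHomogFrac 𝒜 E)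
    (hG : G.FG) (hGE : G ≤ E) : ∃ H : Submodule A K, H.FG ∧ IsHomogFrac 𝒜 H ∧ G ≤ H ∧ H ≤ E := by
  obtain ⟨d, hd, I, hI, hdE⟩ := hE
  have hd0 : algebraMap A K d ≠ 0 := (map_ne_zero_iff _ (IsFractionRing.injective A K)).2 hd.1
  have hinj : Function.Injective (Algebra.linearMap A K) := IsFractionRing.injective A K
  set G' : Ideal A := (algebraMap A K d • G).comap (Algebra.linearMap A K)
  have hdG : algebraMap A K d • G ≤ idealToK I := hdE ▸ smul_le_smul_left _ hGE
  have hG' : idealToK G' = algebraMap A K d • G :=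
    Submodule.map_comap_eq_self (hdG.trans LinearMap.map_le_range)
  have hG'I : G' ≤ I := by
    rw [← Submodule.comap_map_eq_of_injective hinj I]
    exact Submodule.comap_mono hdG
  have hG'fg : G'.FG := Submodule.fg_of_fg_map_injective _ hinj <| by
    change (idealToK G').FG
    rw [hG']
    exact hG.map _
  obtain ⟨J, hJfg, hJ, hG'J, hJI⟩ := Ideal.exists_fg_isHomogeneous_between hI hG'fg hG'I
  refine ⟨(algebraMap A K d)⁻¹ • idealToK J,
    (Submodule.FG.map (f := Algebra.linearMap A K) hJfg).map _,
    ⟨d, hd, J, hJ, smul_inv_smul₀ hd0 _⟩, ?_, ?_⟩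
  · rw [← Submodule.smul_le_iff_le_inv_smul hd0, ← hG']
    exact Submodule.map_mono hG'J
  · rw [Submodule.smul_le_iff_le_inv_smul (inv_ne_zero hd0), inv_inv, hdE]
    exact Submodule.map_mono hJI

theorem IsHomogFrac.isHomogeneous_comap [AddLeftStrictMono Γ] {M : Submodule A K}
    (hM : IsHomogFrac 𝒜 M) : (M.comap (Algebra.linearMap A K)).IsHomogeneous 𝒜 := by
  -- Strict monotonicity of addition in the total order makes `Γ` cancellative, which is what
  -- lets us read `d * a_γ` off the `(δ + γ)`-component of `d * a`.
  let : AddLeftCancelMonoid Γ := { ‹AddCommMonoid Γ›, AddLeftStrictMono.toIsLeftCancelAdd with }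
  obtain ⟨d, hd, I, hI, hdM⟩ := hM
  obtain ⟨δ, hδ⟩ := hd.2
  have hd0 : algebraMap A K d ≠ 0 := (map_ne_zero_iff _ (IsFractionRing.injective A K)).2 hd.1
  intro γ a ha
  have hda : d * a ∈ I := by
    rw [← Submodule.comap_map_eq_of_injective (f := Algebra.linearMap A K)
      (IsFractionRing.injective A K) I]
    change algebraMap A K (d * a) ∈ idealToK I
    rw [← hdM, map_mul]
    exact Submodule.smul_mem_pointwise_smul _ _ _ ha
  have hdaγ := hI (δ + γ) hda
  rw [DirectSum.coe_decompose_mul_add_of_left_mem 𝒜 hδ] at hdaγ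
  have hcomp : algebraMap A K (DirectSum.decompose 𝒜 a γ) =
      (algebraMap A K d)⁻¹ • algebraMap A K (d * DirectSum.decompose 𝒜 a γ) := by
    rw [map_mul, smul_eq_mul, inv_mul_cancel_left₀ hd0]
  rw [Submodule.mem_comap, ← inv_smul_smul₀ hd0 M, hdM, Algebra.linearMap_apply, hcomp]
  exact Submodule.smul_mem_pointwise_smul _ _ _ ⟨_, hdaγ, rfl⟩

namespace Semistar

variable [AddLeftStrictMono Γ] (s : Semistar A K)

theorem isHomogeneous_comap_finFun (hs : HomogPres 𝒜 s.toFun) {E : Submodule A K}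
    (hE0 : E ≠ ⊥) (hE : IsHomogFrac 𝒜 E) :
    ((s.finFun E).comap (Algebra.linearMap A K)).IsHomogeneous 𝒜 := by
  intro γ a ha
  obtain ⟨G, hG, hGfg, hGE, haG⟩ := (s.mem_finFun_iff hE0).1 ha
  obtain ⟨H, hHfg, hH, hGH, hHE⟩ := hE.exists_fg_between hGfg hGE
  have hH0 : H ≠ ⊥ := ne_bot_of_le_ne_bot hG hGH
  have haH : a ∈ (s.toFun H).comap (Algebra.linearMap A K) := s.mono' G H hG hGH haG
  exact s.toFun_le_finFun hH0 hHfg hHE ((hs H hH0 hH).isHomogeneous_comap γ haH)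

theorem homogPres_fin (hs : HomogPres 𝒜 s.toFun) : HomogPres 𝒜 s.fin.toFun := by
  intro E hE0 hE
  obtain ⟨t, ht, I, -, htE⟩ := hs E hE0 hE
  have ht0 : algebraMap A K t ≠ 0 := (map_ne_zero_iff _ (IsFractionRing.injective A K)).2 ht.1
  refine ⟨t, ht, _, ?_, (Submodule.map_comap_eq_self ?_).symm⟩
  · change ((algebraMap A K t • s.finFun E).comap _).IsHomogeneous 𝒜
    rw [← s.finFun_smul ht0]
    exact s.isHomogeneous_comap_finFun hs (Submodule.smul_ne_bot ht0 hE0) (hE.smul ht)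
  · calc algebraMap A K t • s.finFun E ≤ algebraMap A K t • s.toFun E :=
          smul_le_smul_left _ (s.finFun_le E)
      _ = idealToK I := htE
      _ ≤ _ := LinearMap.map_le_range

end Semistar

end Graded

section Retraction

variable {Γ : Type*} [AddCommMonoid Γ] [LinearOrder Γ] [AddLeftStrictMono Γ]
  {A : Type*} [CommRing A] {K : Type*} [Field K] [Algebra A K] [IsFractionRing A K]
  {𝒜 : Γ → AddSubgroup A} [GradedRing 𝒜]

def SStarHP.fin (s : SStarHP K 𝒜) : SStarFHP K 𝒜 :=
  ⟨s.1.fin, s.1.isFiniteType_fin, s.1.homogPres_fin s.2⟩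

theorem SStarHP.continuous_fin : Continuous (SStarHP.fin (K := K) (𝒜 := 𝒜)) := by
  refine continuous_generateFrom_iff.2 ?_
  rintro _ ⟨E, hE, rfl⟩
  have : SStarHP.fin ⁻¹' {s : SStarFHP K 𝒜 | (1 : K) ∈ s.1.toFun E} =
      ⋃ F : {F : Submodule A K // F ≠ ⊥ ∧ F.FG ∧ F ≤ E}, {s : SStarHP K 𝒜 | 1 ∈ s.1.toFun F} := by
    ext s
    simp only [Set.mem_preimage, Set.mem_ofPred_eq, Set.mem_iUnion, Subtype.exists, exists_prop]
    exact (s.1.mem_finFun_iff hE).trans (by simp only [MemStarF, and_assoc])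
  rw [this]
  exact isOpen_iUnion fun F => TopologicalSpace.isOpen_generateFrom_of_mem ⟨F, F.2.1, rfl⟩

end Retraction

theorem sstarHP_retracts_onto_sstarFHP_general
    {Γ : Type*} [AddCommMonoid Γ] [LinearOrder Γ]
    [CovariantClass Γ Γ (· + ·) (· < ·)]
    {A : Type*} [CommRing A]
    (K : Type*) [Field K] [Algebra A K] [IsFractionRing A K]
    (𝒜 : Γ → AddSubgroup A) [GradedRing 𝒜] :
    ∃ φ : SStarHP K 𝒜 → SStarFHP K 𝒜,
      (∀ s : SStarHP K 𝒜, ∀ E : Submodule A K, E ≠ ⊥ → ∀ x : K,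
        x ∈ (φ s).1.toFun E ↔ MemStarF s.1.toFun E x) ∧
      Continuous φ ∧ Function.Surjective φ ∧
      ∀ (s : Semistar A K) (hf : IsFiniteType s.toFun) (hhp : HomogPres 𝒜 s.toFun),
        φ ⟨s, hhp⟩ = ⟨s, hf, hhp⟩ := by
  refine ⟨SStarHP.fin, fun s E hE x => s.1.mem_finFun_iff hE, SStarHP.continuous_fin,
    fun s => ⟨⟨s.1, s.2.2⟩, Subtype.ext (s.1.fin_eq_self s.2.1)⟩,
    fun s hf _ => Subtype.ext (s.fin_eq_self hf)⟩

/-- The canonical map `φ : SStar_{hp}(R) → SStar_{f,hp}(R)`, `⋆ ↦ ⋆_f`,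
is a topological retraction: it is continuous, surjective, and restricts to the identity
on `SStar_{f,hp}(R)`. -/
theorem sstarHP_retracts_onto_sstarFHP
    {Γ : Type*} [AddCommMonoid Γ] [LinearOrder Γ]
    [CovariantClass Γ Γ (· + ·) (· < ·)] [Nontrivial Γ]
    {A : Type*} [CommRing A] [IsDomain A]
    (K : Type*) [Field K] [Algebra A K] [IsFractionRing A K]
    (𝒜 : Γ → AddSubgroup A) [GradedRing 𝒜] :
    ∃ φ : SStarHP K 𝒜 → SStarFHP K 𝒜,
      (∀ s : SStarHP K 𝒜, ∀ E : Submodule A K, E ≠ ⊥ → ∀ x : K,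
        x ∈ (φ s).1.toFun E ↔ MemStarF s.1.toFun E x) ∧
      Continuous φ ∧ Function.Surjective φ ∧
      ∀ (s : Semistar A K) (hf : IsFiniteType s.toFun) (hhp : HomogPres 𝒜 s.toFun),
        φ ⟨s, hhp⟩ = ⟨s, hf, hhp⟩ :=
  sstarHP_retracts_onto_sstarFHP_general K 𝒜
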